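/- arXiv:1201.1798 — 5 statements merged into one kernel-verified Lean document; each statement's English description precedes it below -/
import Mathlib

section
/- Let d ≥ 1 and let V_1, …, V_n (n ≥ 2) be nonzero proper linear subspaces of ℝ^d with positive weights ω_1, …, ω_n, and set m := Σ_{j=1}^n ω_j·dim(V_j). Then max_{i≠j} ⟨P_{V_i}, P_{V_j}⟩ ≥ (m²/d − Σ_{j=1}^n ω_j²·dim(V_j)) / (Σ_{i≠j} ω_i ω_j). -/
open scoped BigOperators

/-- The orthogonal projection onto a subspace `V` of `ℝ^d`, as a linear endomorphism. -/
noncomputable def proj {d : ℕ} (V : Submodule ℝ (EuclideanSpace ℝ (Fin d))) :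
    EuclideanSpace ℝ (Fin d) →ₗ[ℝ] EuclideanSpace ℝ (Fin d) :=
  V.subtype ∘ₗ (V.orthogonalProjectionOnto).toLinearMap

/-- `⟨P_V, P_W⟩ = trace (P_V P_W)`. -/
noncomputable def trPP {d : ℕ} (V W : Submodule ℝ (EuclideanSpace ℝ (Fin d))) : ℝ :=
  LinearMap.trace ℝ _ (proj V ∘ₗ proj W)

/-- With `n ≥ 2` elements, the set of off-diagonal pairs of indices is nonempty. -/
theorem offDiag_univ_nonempty {n : ℕ} (hn : 2 ≤ n) :
    (Finset.univ.offDiag (α := Fin n)).Nonempty := by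
  rw [← Finset.coe_nonempty, Finset.coe_offDiag, Set.offDiag_nonempty]
  exact ⟨⟨0, by omega⟩, by simp, ⟨1, by omega⟩, by simp, by simp [Fin.ext_iff]⟩


/-! The weighted sum `S = ∑ ω_j P_{V_j}` has trace `m` and
`tr S² = ∑ ω_j² dim V_j + ∑_{i≠j} ω_i ω_j ⟨P_{V_i}, P_{V_j}⟩`. Since `S` is symmetric,
Cauchy–Schwarz on its diagonal in an orthonormal basis gives `(tr S)² ≤ d · tr S²`;
bounding each `⟨P_{V_i}, P_{V_j}⟩` by the maximum gives the claim. -/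

theorem Finset.sum_sum_eq_sum_diag_add_sum_offDiag {α M : Type*} [DecidableEq α]
    [AddCommMonoid M] (s : Finset α) (f : α → α → M) :
    ∑ i ∈ s, ∑ j ∈ s, f i j = ∑ i ∈ s, f i i + ∑ ij ∈ s.offDiag, f ij.1 ij.2 := by
  rw [← Finset.sum_product', ← Finset.diag_union_offDiag,
    Finset.sum_union (Finset.disjoint_diag_offDiag s), Finset.sum_diag]

theorem Finset.sum_mul_le_sup'_mul_sum {ι R : Type*} [CommRing R] [LinearOrder R]
    [IsOrderedRing R] {s : Finset ι} (hs : s.Nonempty) (f w : ι → R) (hw : ∀ i ∈ s, 0 ≤ w i) :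
    ∑ i ∈ s, w i * f i ≤ s.sup' hs f * ∑ i ∈ s, w i := by
  rw [Finset.mul_sum]
  refine Finset.sum_le_sum fun i hi => ?_
  rw [mul_comm]
  exact mul_le_mul_of_nonneg_right (Finset.le_sup' f hi) (hw i hi)

theorem LinearMap.trace_sum_smul_comp_sum_smul {R M ι : Type*} [CommRing R] [AddCommGroup M]
    [Module R M] (s : Finset ι) (ω : ι → R) (P : ι → M →ₗ[R] M) :
    LinearMap.trace R M ((∑ i ∈ s, ω i • P i) ∘ₗ (∑ j ∈ s, ω j • P j)) =
      ∑ i ∈ s, ∑ j ∈ s, ω i * ω j * LinearMap.trace R M (P i ∘ₗ P j) := by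
  rw [← Module.End.mul_eq_comp, Finset.sum_mul_sum, map_sum]
  refine Finset.sum_congr rfl fun i _ => ?_
  rw [map_sum]
  refine Finset.sum_congr rfl fun j _ => ?_
  rw [smul_mul_smul_comm, map_smul, smul_eq_mul, Module.End.mul_eq_comp]

open RealInnerProductSpace in
theorem LinearMap.IsSymmetric.trace_sq_div_finrank_le {E : Type*} [NormedAddCommGroup E]
    [InnerProductSpace ℝ E] [FiniteDimensional ℝ E] {T : E →ₗ[ℝ] E} (hT : T.IsSymmetric) :
    LinearMap.trace ℝ E T ^ 2 / Module.finrank ℝ E ≤ LinearMap.trace ℝ E (T ∘ₗ T) := by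
  let b := stdOrthonormalBasis ℝ E
  have hdiag : ∀ i, ⟪b i, T (b i)⟫ ^ 2 ≤ ⟪b i, T (T (b i))⟫ := fun i => by
    rw [← hT (b i) (T (b i)), real_inner_self_eq_norm_sq]
    simpa [b.orthonormal.1 i] using
      pow_le_pow_left₀ (abs_nonneg _) (abs_real_inner_le_norm (b i) (T (b i))) 2
  rw [T.trace_eq_sum_inner b, (T ∘ₗ T).trace_eq_sum_inner b]
  refine div_le_of_le_mul₀ (Nat.cast_nonneg _)
    (Finset.sum_nonneg fun i _ => (sq_nonneg _).trans (hdiag i)) ?_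
  calc (∑ i, ⟪b i, T (b i)⟫) ^ 2 ≤ Finset.univ.card * ∑ i, ⟪b i, T (b i)⟫ ^ 2 :=
        sq_sum_le_card_mul_sum_sq
    _ ≤ (∑ i, ⟪b i, T (T (b i))⟫) * Module.finrank ℝ E := by
        rw [Finset.card_univ, Fintype.card_fin, mul_comm]
        exact mul_le_mul_of_nonneg_right (Finset.sum_le_sum fun i _ => hdiag i) (Nat.cast_nonneg _)

section Projection

variable {d : ℕ} (V : Submodule ℝ (EuclideanSpace ℝ (Fin d)))

theorem isSymmetric_proj : (proj V).IsSymmetric :=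
  V.starProjection_isSymmetric

theorem isIdempotentElem_proj : IsIdempotentElem (proj V) :=
  ContinuousLinearMap.IsIdempotentElem.toLinearMap V.isIdempotentElem_starProjection

theorem trace_proj : LinearMap.trace ℝ _ (proj V) = Module.finrank ℝ V := by
  have h := (LinearMap.IsIdempotentElem.isProj_range _ (isIdempotentElem_proj V)).trace
  rwa [show LinearMap.range (proj V) = V from V.range_starProjection] at h

end Projection

theorem stmt3_general {d n : ℕ} (hn : 2 ≤ n)
    (V : Fin n → Submodule ℝ (EuclideanSpace ℝ (Fin d)))
    (ω : Fin n → ℝ) (hω : ∀ j, 0 < ω j)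
    (m : ℝ) (hm : m = ∑ j, ω j * (Module.finrank ℝ (V j) : ℝ)) :
    Finset.sup' (Finset.univ.offDiag (α := Fin n)) (offDiag_univ_nonempty hn)
        (fun ij => trPP (V ij.1) (V ij.2)) ≥
      (m ^ 2 / d - ∑ j, ω j ^ 2 * (Module.finrank ℝ (V j) : ℝ)) /
        (∑ ij ∈ Finset.univ.offDiag (α := Fin n), ω ij.1 * ω ij.2) := by
  set S := ∑ j, ω j • proj (V j)
  have hS : S.IsSymmetric :=
    LinearMap.isSymmetric_sum _ fun j _ => (isSymmetric_proj (V j)).smul (conj_trivial _)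
  have htrace : LinearMap.trace ℝ _ S = m := by
    simp only [S, map_sum, map_smul, trace_proj, smul_eq_mul, hm]
  have htrace_sq : LinearMap.trace ℝ _ (S ∘ₗ S) = ∑ j, ω j ^ 2 * (Module.finrank ℝ (V j) : ℝ) +
      ∑ ij ∈ Finset.univ.offDiag, ω ij.1 * ω ij.2 * trPP (V ij.1) (V ij.2) := by
    rw [LinearMap.trace_sum_smul_comp_sum_smul, Finset.sum_sum_eq_sum_diag_add_sum_offDiag]
    simp only [← Module.End.mul_eq_comp, (isIdempotentElem_proj _).eq, trace_proj, trPP, sq]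
  have hCS := hS.trace_sq_div_finrank_le
  rw [htrace, htrace_sq, finrank_euclideanSpace_fin] at hCS
  have hmax := Finset.sum_mul_le_sup'_mul_sum (offDiag_univ_nonempty hn)
    (fun ij => trPP (V ij.1) (V ij.2)) (fun ij => ω ij.1 * ω ij.2)
    fun ij _ => (mul_pos (hω _) (hω _)).le
  have hden : 0 < ∑ ij ∈ Finset.univ.offDiag (α := Fin n), ω ij.1 * ω ij.2 :=
    Finset.sum_pos (fun ij _ => mul_pos (hω _) (hω _)) (offDiag_univ_nonempty hn)
  rw [ge_iff_le, div_le_iff₀ hden]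
  linarith

theorem stmt3 {d n : ℕ} (hd : 1 ≤ d) (hn : 2 ≤ n)
    (V : Fin n → Submodule ℝ (EuclideanSpace ℝ (Fin d)))
    (hVbot : ∀ j, V j ≠ ⊥) (hVtop : ∀ j, V j ≠ ⊤)
    (ω : Fin n → ℝ) (hω : ∀ j, 0 < ω j)
    (m : ℝ) (hm : m = ∑ j, ω j * (Module.finrank ℝ (V j) : ℝ)) :
    Finset.sup' (Finset.univ.offDiag (α := Fin n)) (offDiag_univ_nonempty hn)
        (fun ij => trPP (V ij.1) (V ij.2)) ≥
      (m ^ 2 / d - ∑ j, ω j ^ 2 * (Module.finrank ℝ (V j) : ℝ)) /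
        (∑ ij ∈ Finset.univ.offDiag (α := Fin n), ω ij.1 * ω ij.2) :=
  stmt3_general hn V ω hω m hm
end

section
/- Let d ≥ 2 and let V_1, …, V_n be pairwise distinct nonzero proper linear subspaces of ℝ^d that are equiangular, i.e. there is a constant α such that ⟨P_{V_i}, P_{V_j}⟩ = α for all i ≠ j. Then n ≤ d(d+1)/2. -/
/-!
In an orthonormal basis the projections become symmetric idempotent matrices, which live in a
space of dimension `d(d+1)/2`, so it suffices to show that they are linearly independent. If
`∑ gᵢ Pᵢ = 0`, the trace of its square gives `∑ gᵢ² (tr Pᵢ - α) + α (∑ gᵢ)² = 0`. Here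
`α = tr (Pᵢ Pⱼ) ≥ 0` and `tr Pᵢ - α = tr (Pᵢ (1 - Pⱼ)) ≥ 0`; moreover `tr Pᵢ = α` holds for at
most one `i` (two such would give `tr (Pᵢ - Pⱼ)² = 0`), and then `α = tr Pᵢ > 0`. Hence all `gᵢ`
vanish.
-/

open scoped BigOperators

open Function Matrix Module

theorem eq_zero_of_sum_sq_mul_add_mul_sq_sum_eq_zero {κ : Type*} [Fintype κ] {c g : κ → ℝ} {α : ℝ}
    (hc : ∀ i, 0 ≤ c i) (hα : 0 ≤ α) (huniq : ∀ i j, c i = 0 → c j = 0 → i = j)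
    (hpos : ∀ i, c i = 0 → 0 < α) (h : ∑ i, g i ^ 2 * c i + α * (∑ i, g i) ^ 2 = 0) : g = 0 := by
  have hterm : ∀ i ∈ Finset.univ, 0 ≤ g i ^ 2 * c i := fun i _ => mul_nonneg (sq_nonneg _) (hc i)
  have hsum : ∑ i, g i ^ 2 * c i = 0 := by
    linarith [Finset.sum_nonneg hterm, mul_nonneg hα (sq_nonneg (∑ i, g i))]
  have hg : ∀ i, c i ≠ 0 → g i = 0 := fun i hi => by
    simpa [hi] using (Finset.sum_eq_zero_iff_of_nonneg hterm).1 hsum i (Finset.mem_univ i)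
  funext i
  by_cases hi : c i = 0
  · have hS : α * (∑ j, g j) ^ 2 = 0 := by linarith
    rwa [mul_eq_zero, or_iff_right (hpos i hi).ne', sq_eq_zero_iff,
      Finset.sum_eq_single i (fun j _ hj => hg j fun hj0 => hj (huniq j i hj0 hi)) (by simp)] at hS
  · exact hg i hi

namespace Matrix

variable {ι κ : Type*} [Fintype ι] [Fintype κ]

theorem card_le_choose_of_linearIndependent_of_isSymm {K : Type*} [Field K]
    {M : κ → Matrix ι ι K} (hM : LinearIndependent K M) (hsymm : ∀ k, (M k).IsSymm) :
    Fintype.card κ ≤ (Fintype.card ι + 1).choose 2 := by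
  classical
  let L : (Sym2 ι → K) →ₗ[K] Matrix ι ι K :=
    { toFun f := of fun i j => f s(i, j)
      map_add' _ _ := rfl
      map_smul' _ _ := rfl }
  have hspan : Submodule.span K (Set.range M) ≤ LinearMap.range L := by
    refine Submodule.span_le.2 ?_
    rintro _ ⟨k, rfl⟩
    exact ⟨Sym2.lift ⟨M k, fun i j => (hsymm k).apply j i⟩, by ext; rfl⟩
  calc Fintype.card κ = finrank K (Submodule.span K (Set.range M)) := (finrank_span_eq_card hM).symm
    _ ≤ finrank K (LinearMap.range L) := Submodule.finrank_mono hspan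
    _ ≤ finrank K (Sym2 ι → K) := L.finrank_range_le
    _ = (Fintype.card ι + 1).choose 2 := by rw [finrank_fintype_fun_eq_card, Sym2.card]

theorem trace_sum_smul_mul_sum_smul {R : Type*} [CommSemiring R] (M : κ → Matrix ι ι R)
    (g : κ → R) :
    ((∑ i, g i • M i) * ∑ j, g j • M j).trace = ∑ i, ∑ j, g i * g j * (M i * M j).trace := by
  simp only [Finset.sum_mul, Finset.mul_sum, trace_sum, smul_mul_smul, trace_smul, smul_eq_mul]
  exact Finset.sum_comm

namespace IsStarProjection

theorem conjTranspose_eq {R : Type*} [Mul R] [AddCommMonoid R] [Star R] {P : Matrix ι ι R}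
    (hP : IsStarProjection P) : Pᴴ = P :=
  hP.isSelfAdjoint

variable {P Q : Matrix ι ι ℝ}

theorem trace_mul_nonneg (hP : IsStarProjection P) (hQ : IsStarProjection Q) :
    0 ≤ (P * Q).trace := by
  have h : (Q * P)ᴴ * (Q * P) = P * Q * P := by
    rw [conjTranspose_mul, hP.conjTranspose_eq, hQ.conjTranspose_eq, Matrix.mul_assoc,
      ← Matrix.mul_assoc Q, hQ.isIdempotentElem.eq, ← Matrix.mul_assoc]
  calc 0 ≤ ((Q * P)ᴴ * (Q * P)).trace := (posSemidef_conjTranspose_mul_self _).trace_nonneg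
    _ = (P * Q).trace := by rw [h, trace_mul_cycle, hP.isIdempotentElem.eq]

theorem trace_mul_le_trace [DecidableEq ι] (hP : IsStarProjection P) (hQ : IsStarProjection Q) :
    (P * Q).trace ≤ P.trace := by
  have := hP.trace_mul_nonneg hQ.one_sub
  rw [Matrix.mul_sub, Matrix.mul_one, trace_sub] at this
  linarith

theorem trace_pos (hP : IsStarProjection P) (hP0 : P ≠ 0) : 0 < P.trace := by
  have h : (Pᴴ * P).trace = P.trace := by
    rw [hP.conjTranspose_eq, hP.isIdempotentElem.eq]
  rw [← h]
  exact (posSemidef_conjTranspose_mul_self P).trace_nonneg.lt_of_ne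
    (Ne.symm (trace_conjTranspose_mul_self_eq_zero_iff.not.2 hP0))

theorem trace_conjTranspose_sub_mul_sub (hP : IsStarProjection P) (hQ : IsStarProjection Q) :
    ((P - Q)ᴴ * (P - Q)).trace = P.trace + Q.trace - 2 * (P * Q).trace := by
  rw [conjTranspose_sub, hP.conjTranspose_eq, hQ.conjTranspose_eq, sub_mul, mul_sub,
    mul_sub, hP.isIdempotentElem.eq, hQ.isIdempotentElem.eq, trace_sub, trace_sub, trace_sub,
    trace_mul_comm Q P]
  ring

theorem eq_of_trace_mul_eq (hP : IsStarProjection P) (hQ : IsStarProjection Q)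
    (hPQ : (P * Q).trace = P.trace) (hQP : (P * Q).trace = Q.trace) : P = Q := by
  rw [← sub_eq_zero, ← trace_conjTranspose_mul_self_eq_zero_iff,
    hP.trace_conjTranspose_sub_mul_sub hQ]
  linarith

end IsStarProjection

theorem trace_sum_smul_mul_sum_smul_of_isStarProjection [DecidableEq κ] {M : κ → Matrix ι ι ℝ}
    (hM : ∀ k, IsStarProjection (M k)) {α : ℝ} (hα : ∀ i j, i ≠ j → (M i * M j).trace = α)
    (g : κ → ℝ) :
    ((∑ i, g i • M i) * ∑ j, g j • M j).trace =
      ∑ i, g i ^ 2 * ((M i).trace - α) + α * (∑ i, g i) ^ 2 := by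
  have hterm : ∀ i j, g i * g j * (M i * M j).trace =
      (if i = j then g i ^ 2 * ((M i).trace - α) else 0) + α * (g i * g j) := by
    intro i j
    split_ifs with hij
    · rw [hij, (hM j).isIdempotentElem.eq]; ring
    · rw [hα i j hij]; ring
  rw [trace_sum_smul_mul_sum_smul]
  simp only [hterm, Finset.sum_add_distrib, Finset.sum_ite_eq, Finset.mem_univ, if_true,
    ← Finset.mul_sum, sq, Finset.sum_mul_sum]

theorem linearIndependent_of_isStarProjection_of_trace_mul_eq [DecidableEq ι]
    {M : κ → Matrix ι ι ℝ} (hM : ∀ k, IsStarProjection (M k)) (hinj : Injective M)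
    (hne : ∀ k, M k ≠ 0) {α : ℝ} (hα : ∀ i j, i ≠ j → (M i * M j).trace = α) :
    LinearIndependent ℝ M := by
  classical
  rcases subsingleton_or_nontrivial κ with _ | _
  · exact (linearIndependent_subsingleton_index_iff M).2 hne
  have hα_nonneg : 0 ≤ α := by
    obtain ⟨i, j, hij⟩ := exists_pair_ne κ
    exact hα i j hij ▸ (hM i).trace_mul_nonneg (hM j)
  have hα_le : ∀ i, α ≤ (M i).trace := fun i => by
    obtain ⟨j, hj⟩ := exists_ne i
    exact hα i j hj.symm ▸ (hM i).trace_mul_le_trace (hM j)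
  rw [Fintype.linearIndependent_iff]
  intro g hg
  refine congrFun (eq_zero_of_sum_sq_mul_add_mul_sq_sum_eq_zero (c := fun i => (M i).trace - α)
    (fun i => sub_nonneg.2 (hα_le i)) hα_nonneg (fun i j hi hj => ?_) (fun i hi => ?_) ?_)
  · by_contra hij
    refine hij (hinj ((hM i).eq_of_trace_mul_eq (hM j) ?_ ?_)) <;> linarith [hα i j hij]
  · linarith [(hM i).trace_pos (hne i)]
  · rw [← trace_sum_smul_mul_sum_smul_of_isStarProjection hM hα, hg, zero_mul, trace_zero]

end Matrix

open Submodule in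
theorem card_le_choose_of_trace_starProjection_comp_eq {E κ : Type*} [NormedAddCommGroup E]
    [InnerProductSpace ℝ E] [FiniteDimensional ℝ E] [Fintype κ] {V : κ → Submodule ℝ E}
    (hinj : Injective V) (hbot : ∀ k, V k ≠ ⊥) {α : ℝ}
    (hα : ∀ i j, i ≠ j →
      LinearMap.trace ℝ E ((V i).starProjection.toLinearMap ∘ₗ (V j).starProjection) = α) :
    Fintype.card κ ≤ (finrank ℝ E + 1).choose 2 := by
  let b := stdOrthonormalBasis ℝ E
  let φ := LinearMap.toMatrixOrthonormal b
  let M : κ → Matrix _ _ ℝ := fun k => φ (V k).starProjection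
  have hM : ∀ k, IsStarProjection (M k) := fun k =>
    (LinearMap.isStarProjection_iff_isSymmetricProjection.2
      (isSymmetricProjection_starProjection _)).map φ
  have hproj_inj : Injective fun U : Submodule ℝ E => (U.starProjection : E →ₗ[ℝ] E) :=
    fun U W h => starProjection_inj.1 (ContinuousLinearMap.coe_injective h)
  have hne : ∀ k, M k ≠ 0 := fun k h => hbot k (hproj_inj (by simpa [M] using h))
  have htrace : ∀ i j, LinearMap.trace ℝ E
      ((V i).starProjection.toLinearMap ∘ₗ (V j).starProjection) = (M i * M j).trace := by
    intro i j
    rw [LinearMap.trace_eq_matrix_trace ℝ b.toBasis, ← Module.End.mul_eq_comp, ← map_mul]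
    rfl
  have hindep := linearIndependent_of_isStarProjection_of_trace_mul_eq hM
    (φ.injective.comp (hproj_inj.comp hinj)) hne (fun i j hij => htrace i j ▸ hα i j hij)
  simpa using card_le_choose_of_linearIndependent_of_isSymm hindep
    fun k => isHermitian_iff_isSymm.1 (hM k).isSelfAdjoint

theorem trPP_eq_trace_starProjection_comp {d : ℕ} (V W : Submodule ℝ (EuclideanSpace ℝ (Fin d))) :
    trPP V W = LinearMap.trace ℝ _ (V.starProjection.toLinearMap ∘ₗ W.starProjection) :=
  rfl

theorem stmt6_general {d n : ℕ}
    (V : Fin n → Submodule ℝ (EuclideanSpace ℝ (Fin d)))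
    (hVinj : Function.Injective V)
    (hVbot : ∀ j, V j ≠ ⊥)
    (α : ℝ) (hequi : ∀ i j, i ≠ j → trPP (V i) (V j) = α) :
    n ≤ (d + 1).choose 2 := by
  simpa using card_le_choose_of_trace_starProjection_comp_eq hVinj hVbot
    fun i j hij => trPP_eq_trace_starProjection_comp (V i) (V j) ▸ hequi i j hij

theorem stmt6 {d n : ℕ} (hd : 2 ≤ d)
    (V : Fin n → Submodule ℝ (EuclideanSpace ℝ (Fin d)))
    (hVinj : Function.Injective V)
    (hVbot : ∀ j, V j ≠ ⊥) (hVtop : ∀ j, V j ≠ ⊤)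
    (α : ℝ) (hequi : ∀ i j, i ≠ j → trPP (V i) (V j) = α) :
    n ≤ (d + 1).choose 2 :=
  stmt6_general V hVinj hVbot α hequi
end

section
/- Let p ≥ 1 be an integer, let 1 ≤ k ≤ d−1, and let {(V_j, ω_j)}_{j=1}^n be a tight p-fusion frame in ℝ^d in which every subspace V_j has dimension k. Then the family of orthogonal complements {(V_j^⊥, ω_j)}_{j=1}^n is also a tight p-fusion frame, i.e. there is a constant B > 0 with Σ_{j=1}^n ω_j ‖P_{V_j^⊥}(x)‖^{2p} = B ‖x‖^{2p} for all x ∈ ℝ^d. -/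
open scoped BigOperators

/-!
Write `Q_j x = ‖P_{V_j} x‖ ^ 2`, a quadratic form of trace `k` with `|∇Q_j|² = 4 Q_j`. The
Laplacian therefore sends `Q_j ^ (m + 1)` to `2 (m + 1) (2 m + k) Q_j ^ m`, and `‖x‖ ^ (2 (m + 1))`
to `2 (m + 1) (2 m + d) ‖x‖ ^ (2 m)`: applying it to a tight moment identity of order `m + 1` gives
one of order `m`, so all moments of order `≤ p` are tight. As `‖P_{V_j^⊥} x‖ ^ 2 = ‖x‖ ^ 2 - Q_j x`,
the binomial theorem writes the `p`-th moment of the complements as a combination of these. Its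
bound is positive because the complements are nonzero.

The Laplacian is taken as the sum of second derivatives at `t = 0` of `t ↦ f (x + t • b i)` over an
orthonormal basis `b`; along a line every function involved is a polynomial in `t`.
-/

open Finset RealInnerProductSpace Module

open Polynomial in
lemma eval_zero_derivative_derivative_quadratic_pow {R : Type*} [CommRing R] (a b c : R) (m : ℕ) :
    (derivative (derivative ((C a + C b * X + C c * X ^ 2) ^ (m + 1)))).eval 0
      = (m + 1) * (m * a ^ (m - 1) * b ^ 2 + 2 * a ^ m * c) := by
  have hq : derivative (C a + C b * X + C c * X ^ 2) = C b + C (c * 2) * X := by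
    simp only [derivative_add, derivative_C, derivative_C_mul_X, derivative_C_mul_X_pow]
    norm_num
  have hq' : derivative (C b + C (c * 2) * X) = C (c * 2) := by
    simp only [derivative_add, derivative_C, derivative_C_mul_X, zero_add]
  rw [derivative_pow, hq, derivative_mul, derivative_mul, derivative_pow, hq, hq']
  simp only [derivative_C, zero_mul, zero_add, eval_add, eval_mul, eval_pow, eval_C, eval_X]
  push_cast
  ring

open Polynomial in
lemma sum_mul_secondDeriv_eq_of_sum_mul_quadratic_pow_eq {R ι : Type*} [Field R] [CharZero R]
    [Fintype ι] (ω a b c : ι → R) (a' b' c' r : R) (m : ℕ)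
    (h : ∀ t, ∑ j, ω j * (a j + b j * t + c j * t ^ 2) ^ (m + 1)
      = r * (a' + b' * t + c' * t ^ 2) ^ (m + 1)) :
    ∑ j, ω j * (m * a j ^ (m - 1) * b j ^ 2 + 2 * a j ^ m * c j)
      = r * (m * a' ^ (m - 1) * b' ^ 2 + 2 * a' ^ m * c') := by
  have hpoly : ∑ j, C (ω j) * (C (a j) + C (b j) * X + C (c j) * X ^ 2) ^ (m + 1)
      = C r * (C a' + C b' * X + C c' * X ^ 2) ^ (m + 1) :=
    Polynomial.funext fun t => by simpa [eval_finsetSum] using h t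
  have hderiv := congrArg (fun P => (derivative (derivative P)).eval 0) hpoly
  simp only [map_sum, derivative_C_mul, eval_finsetSum, eval_C_mul,
    eval_zero_derivative_derivative_quadratic_pow, mul_left_comm (ω _) ((m : R) + 1),
    mul_left_comm r ((m : R) + 1), ← mul_sum] at hderiv
  exact mul_left_cancel₀ (by exact_mod_cast m.succ_ne_zero) hderiv

lemma sum_mul_sub_pow_eq_of_sum_mul_pow_eq {R ι : Type*} [CommRing R] [Fintype ι]
    (ω q : ι → R) (r : R) (A : ℕ → R) (p : ℕ)
    (h : ∀ m ≤ p, ∑ j, ω j * q j ^ m = A m * r ^ m) :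
    ∑ j, ω j * (r - q j) ^ p = (∑ m ∈ range (p + 1), (-1) ^ m * p.choose m * A m) * r ^ p := by
  calc ∑ j, ω j * (r - q j) ^ p
      = ∑ m ∈ range (p + 1), (-1) ^ m * p.choose m * r ^ (p - m) * ∑ j, ω j * q j ^ m := by
        simp_rw [sub_eq_neg_add, add_pow, mul_sum]
        rw [sum_comm]
        refine sum_congr rfl fun m _ => sum_congr rfl fun j _ => ?_
        rw [neg_pow]
        ring
    _ = (∑ m ∈ range (p + 1), (-1) ^ m * p.choose m * A m) * r ^ p := by
        rw [sum_mul]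
        refine sum_congr rfl fun m hm => ?_
        have hmp : m ≤ p := Nat.lt_succ_iff.mp (mem_range.mp hm)
        rw [h m hmp, mul_comm (A m), ← mul_assoc, mul_assoc _ _ (r ^ m), ← pow_add,
          Nat.sub_add_cancel hmp]
        ring

section

variable {E : Type*} [NormedAddCommGroup E] [InnerProductSpace ℝ E]

lemma norm_starProjection_add_smul_sq (K : Submodule ℝ E) [K.HasOrthogonalProjection]
    (x y : E) (t : ℝ) :
    ‖K.starProjection (x + t • y)‖ ^ 2 = ‖K.starProjection x‖ ^ 2
      + 2 * ⟪K.starProjection x, y⟫ * t + ‖K.starProjection y‖ ^ 2 * t ^ 2 := by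
  have hxy : ⟪K.starProjection x, K.starProjection y⟫ = ⟪K.starProjection x, y⟫ := by
    rw [← K.inner_starProjection_left_eq_right,
      K.starProjection_eq_self_iff.mpr (K.starProjection_apply_mem x)]
  rw [map_add, map_smul, norm_add_sq_real, real_inner_smul_right, hxy, norm_smul,
    mul_pow, Real.norm_eq_abs, sq_abs]
  ring

lemma sum_norm_starProjection_sq [FiniteDimensional ℝ E] {ι : Type*} [Fintype ι]
    (K : Submodule ℝ E) (b : OrthonormalBasis ι ℝ E) :
    ∑ i, ‖K.starProjection (b i)‖ ^ 2 = finrank ℝ K := by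
  have htrace := (LinearMap.IsIdempotentElem.isProj_range _
    (ContinuousLinearMap.IsIdempotentElem.toLinearMap K.isIdempotentElem_starProjection)).trace
  rw [LinearMap.trace_eq_sum_inner _ b, Submodule.range_starProjection] at htrace
  rw [← htrace]
  refine sum_congr rfl fun i _ => ?_
  simpa [real_inner_comm] using (K.re_inner_starProjection_eq_normSq (b i)).symm

/-- `(m + 1)` times the left side is the Laplacian of `x ↦ ‖K.starProjection x‖ ^ (2 * (m + 1))`,
computed as a sum of second directional derivatives along an orthonormal basis. -/
lemma sum_secondDeriv_norm_starProjection_sq_pow [FiniteDimensional ℝ E] {ι : Type*} [Fintype ι]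
    (K : Submodule ℝ E) (b : OrthonormalBasis ι ℝ E) (x : E) (m : ℕ) :
    ∑ i, (m * (‖K.starProjection x‖ ^ 2) ^ (m - 1) * (2 * ⟪K.starProjection x, b i⟫) ^ 2
        + 2 * (‖K.starProjection x‖ ^ 2) ^ m * ‖K.starProjection (b i)‖ ^ 2)
      = 2 * (2 * m + finrank ℝ K) * (‖K.starProjection x‖ ^ 2) ^ m := by
  set a := ‖K.starProjection x‖ ^ 2
  have hpow : (m : ℝ) * a ^ (m - 1) * a = m * a ^ m := by
    rcases m with _ | m
    · simp
    · rw [Nat.add_sub_cancel, mul_assoc, ← pow_succ]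
  simp only [mul_pow, sum_add_distrib, ← mul_sum, b.sum_sq_inner_left,
    sum_norm_starProjection_sq]
  linear_combination 4 * hpow

end

section

variable {E ι : Type*} [NormedAddCommGroup E] [InnerProductSpace ℝ E] [FiniteDimensional ℝ E]
  [Fintype ι]

lemma sum_mul_norm_starProjection_sq_pow_of_succ {V : ι → Submodule ℝ E} {ω : ι → ℝ} {k m : ℕ}
    {A : ℝ} (hV : ∀ j, finrank ℝ (V j) = k)
    (h : ∀ x : E, ∑ j, ω j * (‖(V j).starProjection x‖ ^ 2) ^ (m + 1) = A * (‖x‖ ^ 2) ^ (m + 1))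
    (x : E) :
    (2 * m + k) * ∑ j, ω j * (‖(V j).starProjection x‖ ^ 2) ^ m
      = A * (2 * m + finrank ℝ E) * (‖x‖ ^ 2) ^ m := by
  set T : Submodule ℝ E := ⊤
  set b := stdOrthonormalBasis ℝ E
  have hT : ∀ v : E, T.starProjection v = v := by simp [T, Submodule.starProjection_top]
  have hTh : ∀ y : E, ∑ j, ω j * (‖(V j).starProjection y‖ ^ 2) ^ (m + 1)
      = A * (‖T.starProjection y‖ ^ 2) ^ (m + 1) := by simpa only [hT] using h
  have hdir : ∀ i, ∑ j, ω j * (m * (‖(V j).starProjection x‖ ^ 2) ^ (m - 1)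
        * (2 * ⟪(V j).starProjection x, b i⟫) ^ 2
        + 2 * (‖(V j).starProjection x‖ ^ 2) ^ m * ‖(V j).starProjection (b i)‖ ^ 2)
      = A * (m * (‖T.starProjection x‖ ^ 2) ^ (m - 1) * (2 * ⟪T.starProjection x, b i⟫) ^ 2
        + 2 * (‖T.starProjection x‖ ^ 2) ^ m * ‖T.starProjection (b i)‖ ^ 2) :=
    fun i => sum_mul_secondDeriv_eq_of_sum_mul_quadratic_pow_eq _ _ _ _ _ _ _ _ m fun t => by
      simpa only [← norm_starProjection_add_smul_sq] using hTh (x + t • b i)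
  have hsum := sum_congr rfl fun i (_ : i ∈ univ) => hdir i
  rw [sum_comm, ← mul_sum] at hsum
  have hTrank : finrank ℝ T = finrank ℝ E := finrank_top ℝ E
  simp only [← mul_sum, sum_secondDeriv_norm_starProjection_sq_pow, hV, hTrank] at hsum
  simp only [hT, mul_left_comm (ω _), ← mul_sum] at hsum
  linear_combination hsum / 2

/-- The tight `m`-fusion frame identity, without the sign conditions on the weights and the bound. -/
def IsTightFusionMoment (V : ι → Submodule ℝ E) (ω : ι → ℝ) (m : ℕ) : Prop :=
  ∃ A : ℝ, ∀ x : E, ∑ j, ω j * ‖(V j).starProjection x‖ ^ (2 * m) = A * ‖x‖ ^ (2 * m)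

namespace IsTightFusionMoment

variable {V : ι → Submodule ℝ E} {ω : ι → ℝ} {k : ℕ}

lemma zero (V : ι → Submodule ℝ E) (ω : ι → ℝ) : IsTightFusionMoment V ω 0 :=
  ⟨∑ j, ω j, fun x => by simp⟩

lemma of_succ (hV : ∀ j, finrank ℝ (V j) = k) {m : ℕ} (h : IsTightFusionMoment V ω (m + 1)) :
    IsTightFusionMoment V ω m := by
  rcases Nat.eq_zero_or_pos m with rfl | hm
  · exact zero V ω
  obtain ⟨A, hA⟩ := h
  have hk : (0 : ℝ) < 2 * m + k := by positivity
  refine ⟨A * (2 * m + finrank ℝ E) / (2 * m + k), fun x => ?_⟩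
  have hsucc := sum_mul_norm_starProjection_sq_pow_of_succ hV
    (fun y => by simpa only [pow_mul] using hA y) x
  simp only [pow_mul]
  rw [div_mul_eq_mul_div, eq_div_iff hk.ne', ← hsucc]
  ring

lemma of_le (hV : ∀ j, finrank ℝ (V j) = k) {p m : ℕ} (h : IsTightFusionMoment V ω p)
    (hm : m ≤ p) : IsTightFusionMoment V ω m := by
  induction p with
  | zero => rwa [Nat.le_zero.mp hm]
  | succ p ih =>
    rcases Nat.of_le_succ hm with hm | rfl
    · exact ih (h.of_succ hV) hm
    · exact h

lemma orthogonal (hV : ∀ j, finrank ℝ (V j) = k) {p : ℕ} (h : IsTightFusionMoment V ω p) :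
    IsTightFusionMoment (fun j => (V j)ᗮ) ω p := by
  choose! A hA using fun m (hm : m ≤ p) => h.of_le hV hm
  refine ⟨∑ m ∈ range (p + 1), (-1) ^ m * p.choose m * A m, fun x => ?_⟩
  have hperp : ∀ j, ‖(V j)ᗮ.starProjection x‖ ^ (2 * p)
      = (‖x‖ ^ 2 - ‖(V j).starProjection x‖ ^ 2) ^ p := fun j => by
    rw [(V j).norm_sq_eq_add_norm_sq_starProjection x, pow_mul, add_sub_cancel_left]
  simp only [hperp, pow_mul]
  exact sum_mul_sub_pow_eq_of_sum_mul_pow_eq ω _ _ A p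
    fun m hm => by simpa only [pow_mul] using hA m hm x

end IsTightFusionMoment

lemma nonempty_of_sum_mul_norm_starProjection_pow_eq [Nontrivial E] {V : ι → Submodule ℝ E}
    {ω : ι → ℝ} {p : ℕ} {A : ℝ} (hA : A ≠ 0)
    (h : ∀ x : E, ∑ j, ω j * ‖(V j).starProjection x‖ ^ (2 * p) = A * ‖x‖ ^ (2 * p)) :
    Nonempty ι := by
  by_contra hι
  rw [not_nonempty_iff] at hι
  obtain ⟨x, hx⟩ := exists_ne (0 : E)
  have := h x
  simp only [univ_eq_empty, sum_empty] at this
  exact mul_ne_zero hA (pow_ne_zero _ (norm_ne_zero_iff.mpr hx)) this.symm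

lemma pos_of_sum_mul_norm_starProjection_pow_eq {W : ι → Submodule ℝ E} {ω : ι → ℝ}
    (hω : ∀ j, 0 < ω j) {j₀ : ι} (hW : W j₀ ≠ ⊥) {p : ℕ} {B : ℝ}
    (h : ∀ x : E, ∑ j, ω j * ‖(W j).starProjection x‖ ^ (2 * p) = B * ‖x‖ ^ (2 * p)) :
    0 < B := by
  obtain ⟨x, hxW, hx⟩ := (Submodule.ne_bot_iff _).mp hW
  have hle : ω j₀ * ‖x‖ ^ (2 * p) ≤ B * ‖x‖ ^ (2 * p) := by
    have := single_le_sum (f := fun j => ω j * ‖(W j).starProjection x‖ ^ (2 * p))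
      (fun j _ => by have := hω j; positivity) (mem_univ j₀)
    rwa [(W j₀).starProjection_eq_self_iff.mpr hxW, h x] at this
  exact (hω j₀).trans_le (le_of_mul_le_mul_right hle (by positivity))

end

theorem stmt12_general {d n k : ℕ} (p : ℕ) (hk1 : 1 ≤ k) (hk2 : k ≤ d - 1)
    (V : Fin n → Submodule ℝ (EuclideanSpace ℝ (Fin d)))
    (hVdim : ∀ j, Module.finrank ℝ (V j) = k)
    (ω : Fin n → ℝ) (hω : ∀ j, 0 < ω j)
    (A : ℝ) (hA : 0 < A)
    (h : ∀ x : EuclideanSpace ℝ (Fin d),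
      ∑ j, ω j * ‖proj (V j) x‖ ^ (2 * p) = A * ‖x‖ ^ (2 * p)) :
    ∃ B : ℝ, 0 < B ∧ ∀ x : EuclideanSpace ℝ (Fin d),
      ∑ j, ω j * ‖proj (V j)ᗮ x‖ ^ (2 * p) = B * ‖x‖ ^ (2 * p) := by
  have hproj : ∀ W : Submodule ℝ (EuclideanSpace ℝ (Fin d)), ∀ x, proj W x = W.starProjection x :=
    fun _ _ => rfl
  simp only [hproj] at h ⊢
  have hV_ne_top : ∀ j, V j ≠ ⊤ := fun j hj => by
    have := hVdim j
    rw [hj, finrank_top, finrank_euclideanSpace_fin] at this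
    omega
  have : Nontrivial (EuclideanSpace ℝ (Fin d)) :=
    Module.nontrivial_of_finrank_pos (by rw [finrank_euclideanSpace_fin]; omega)
  obtain ⟨j₀⟩ := nonempty_of_sum_mul_norm_starProjection_pow_eq hA.ne' h
  obtain ⟨B, hB⟩ := IsTightFusionMoment.orthogonal hVdim ⟨A, h⟩
  exact ⟨B, pos_of_sum_mul_norm_starProjection_pow_eq hω
    (Submodule.orthogonal_eq_bot_iff.not.mpr (hV_ne_top j₀)) hB, hB⟩

theorem stmt12 {d n k : ℕ} (p : ℕ) (hp : 1 ≤ p) (hk1 : 1 ≤ k) (hk2 : k ≤ d - 1)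
    (V : Fin n → Submodule ℝ (EuclideanSpace ℝ (Fin d)))
    (hVdim : ∀ j, Module.finrank ℝ (V j) = k)
    (ω : Fin n → ℝ) (hω : ∀ j, 0 < ω j)
    (A : ℝ) (hA : 0 < A)
    (h : ∀ x : EuclideanSpace ℝ (Fin d),
      ∑ j, ω j * ‖proj (V j) x‖ ^ (2 * p) = A * ‖x‖ ^ (2 * p)) :
    ∃ B : ℝ, 0 < B ∧ ∀ x : EuclideanSpace ℝ (Fin d),
      ∑ j, ω j * ‖proj (V j)ᗮ x‖ ^ (2 * p) = B * ‖x‖ ^ (2 * p) :=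
  stmt12_general p hk1 hk2 V hVdim ω hω A hA h
end

section
/- Let p ≥ 1 be an integer, let 1 ≤ k ≤ d−1, and let {(V_j, ω_j)}_{j=1}^n be a tight p-fusion frame in ℝ^d with bound A_p in which every subspace V_j has dimension k. Then A_p = ((k/2)_p / (d/2)_p) · Σ_{j=1}^n ω_j, where (a)_p denotes the rising factorial a(a+1)⋯(a+p−1). -/
/-!
Integrate the frame identity against the standard Gaussian weight `exp (-‖x‖² / 2)` on `ℝ^d`.
The isometry `ℝ^d ≃ V × Vᗮ` splits the Gaussian into a product, so the `2p`-th moment of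
`‖P_V x‖` is that of a standard Gaussian on the `k`-dimensional space `V`. In polar coordinates
this moment is `(2π)^(d/2) 2^p (k/2)_p`, while that of `‖x‖` is `(2π)^(d/2) 2^p (d/2)_p`;
comparing the two sides gives `A (d/2)_p = (k/2)_p ∑ ω_j`.
-/

open scoped BigOperators

open MeasureTheory Real Finset Module

theorem Gamma_add_nat_eq_mul_prod {a : ℝ} (ha : 0 < a) (s : ℕ) :
    Gamma (a + s) = Gamma a * ∏ l ∈ range s, (a + l) := by
  induction s with
  | zero => simp
  | succ s ih =>
    rw [Nat.cast_succ, ← add_assoc, Gamma_add_one (by positivity : (0:ℝ) < a + s).ne',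
      prod_range_succ, ih]
    ring

/-- The radial integrand of a Gaussian moment, in the shape of
`integral_rpow_mul_exp_neg_mul_rpow`. -/
theorem pow_smul_pow_mul_exp_eq_rpow_mul_exp (m s : ℕ) (y : ℝ) :
    y ^ (m - 1) • (y ^ (2 * s) * exp (-y ^ 2 / 2)) =
      y ^ ((m - 1 + 2 * s : ℕ) : ℝ) * exp (-(1 / 2) * y ^ (2 : ℝ)) := by
  rw [rpow_natCast, rpow_two, pow_add, smul_eq_mul]
  ring_nf

section Gaussian

variable {E : Type*} [NormedAddCommGroup E] [InnerProductSpace ℝ E] [FiniteDimensional ℝ E]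
  [MeasurableSpace E] [BorelSpace E]

theorem integral_exp_neg_norm_sq_div_two :
    ∫ x : E, exp (-‖x‖ ^ 2 / 2) = (2 * π) ^ ((finrank ℝ E : ℝ) / 2) := by
  simp_rw [neg_div, div_eq_inv_mul (‖_‖ ^ 2), ← neg_mul]
  rw [GaussianFourier.integral_rexp_neg_mul_sq_norm (inv_pos.2 two_pos), div_inv_eq_mul, mul_comm]

theorem integrable_norm_pow_mul_gaussian [Nontrivial E] (s : ℕ) :
    Integrable (fun x : E => ‖x‖ ^ (2 * s) * exp (-‖x‖ ^ 2 / 2)) := by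
  rw [integrable_fun_norm_addHaar volume (f := fun y => y ^ (2 * s) * exp (-y ^ 2 / 2))]
  simp_rw [pow_smul_pow_mul_exp_eq_rpow_mul_exp]
  exact integrableOn_rpow_mul_exp_neg_mul_rpow (neg_one_lt_zero.trans_le (Nat.cast_nonneg _))
    two_pos one_half_pos

theorem integral_norm_pow_mul_gaussian [Nontrivial E] (s : ℕ) :
    ∫ x : E, ‖x‖ ^ (2 * s) * exp (-‖x‖ ^ 2 / 2) =
      (2 * π) ^ ((finrank ℝ E : ℝ) / 2) * 2 ^ s * ∏ l ∈ range s, ((finrank ℝ E : ℝ) / 2 + l) := by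
  have hm : 1 ≤ finrank ℝ E := finrank_pos
  rw [integral_fun_norm_addHaar volume (fun y => y ^ (2 * s) * exp (-y ^ 2 / 2)),
    measureReal_def, InnerProductSpace.volume_ball]
  simp_rw [pow_smul_pow_mul_exp_eq_rpow_mul_exp]
  rw [integral_rpow_mul_exp_neg_mul_rpow two_pos (neg_one_lt_zero.trans_le (Nat.cast_nonneg _))
    one_half_pos]
  set a : ℝ := (finrank ℝ E : ℝ) / 2 with ha_def
  have ha : 0 < a := by positivity
  have hexp : ((finrank ℝ E - 1 + 2 * s : ℕ) : ℝ) + 1 = 2 * (a + s) := by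
    push_cast [Nat.cast_sub hm]; ring
  have hhalf : (1 / 2 : ℝ) ^ (-(2 * (a + s)) / 2) = 2 ^ a * 2 ^ s := by
    rw [one_div, inv_rpow zero_le_two, ← rpow_neg zero_le_two, neg_div, neg_neg,
      mul_div_cancel_left₀ _ two_ne_zero, rpow_add two_pos, rpow_natCast]
  have hpi : (2 * π) ^ a = 2 ^ a * √π ^ finrank ℝ E := by
    rw [mul_rpow zero_le_two pi_pos.le, sqrt_eq_rpow, ← rpow_natCast, ← rpow_mul pi_pos.le, ha_def]
    ring_nf
  rw [hexp, mul_div_cancel_left₀ _ two_ne_zero, hhalf, hpi, Gamma_add_one ha.ne',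
    Gamma_add_nat_eq_mul_prod ha, ENNReal.ofReal_one, one_pow, one_mul,
    ENNReal.toReal_ofReal (by positivity), nsmul_eq_mul, smul_eq_mul]
  have hΓ : Gamma a ≠ 0 := (Gamma_pos_of_pos ha).ne'
  have hm2 : (finrank ℝ E : ℝ) = 2 * a := by rw [ha_def]; ring
  field_simp
  rw [hm2]
  ring

theorem integrable_norm_orthogonalProjection_pow_mul_gaussian [Nontrivial E] (V : Submodule ℝ E)
    (s : ℕ) :
    Integrable (fun x : E => ‖V.orthogonalProjectionOnto x‖ ^ (2 * s) * exp (-‖x‖ ^ 2 / 2)) := by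
  refine (integrable_norm_pow_mul_gaussian s).mono' (Continuous.aestronglyMeasurable (by fun_prop))
    (.of_forall fun x => ?_)
  rw [norm_of_nonneg (by positivity)]
  gcongr
  exact V.norm_orthogonalProjectionOnto_apply_le x

theorem integral_norm_orthogonalProjection_pow_mul_gaussian_eq_mul (V : Submodule ℝ E) (s : ℕ) :
    ∫ x : E, ‖V.orthogonalProjectionOnto x‖ ^ (2 * s) * exp (-‖x‖ ^ 2 / 2) =
      (∫ u : V, ‖u‖ ^ (2 * s) * exp (-‖u‖ ^ 2 / 2)) * ∫ w : Vᗮ, exp (-‖w‖ ^ 2 / 2) := by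
  let φ : E ≃ᵐ V × Vᗮ :=
    V.orthogonalDecomposition.toHomeomorph.toMeasurableEquiv.trans (MeasurableEquiv.toLp 2 _).symm
  have hφ : MeasurePreserving φ :=
    V.orthogonalDecomposition.measurePreserving.trans (WithLp.volume_preserving_ofLp _ _)
  let g : V × Vᗮ → ℝ := fun y => ‖y.1‖ ^ (2 * s) * exp (-‖y.1‖ ^ 2 / 2) * exp (-‖y.2‖ ^ 2 / 2)
  have hg : ∀ x, ‖V.orthogonalProjectionOnto x‖ ^ (2 * s) * exp (-‖x‖ ^ 2 / 2) = g (φ x) := by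
    intro x
    have hφx : φ x = (V.orthogonalProjectionOnto x, Vᗮ.orthogonalProjectionOnto x) := by simp [φ]
    simp only [g, hφx, mul_assoc, ← exp_add, Submodule.norm_sq_eq_add_norm_sq_projection x V]
    ring_nf
  simp_rw [hg, hφ.integral_comp' (g := g)]
  rw [Measure.volume_eq_prod (α := V) (β := Vᗮ)]
  exact integral_prod_mul (L := ℝ) (fun u : V => ‖u‖ ^ (2 * s) * exp (-‖u‖ ^ 2 / 2))
    (fun w : Vᗮ => exp (-‖w‖ ^ 2 / 2))

theorem integral_norm_orthogonalProjection_pow_mul_gaussian (V : Submodule ℝ E) [Nontrivial V]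
    (s : ℕ) :
    ∫ x : E, ‖V.orthogonalProjectionOnto x‖ ^ (2 * s) * exp (-‖x‖ ^ 2 / 2) =
      (2 * π) ^ ((finrank ℝ E : ℝ) / 2) * 2 ^ s * ∏ l ∈ range s, ((finrank ℝ V : ℝ) / 2 + l) := by
  rw [integral_norm_orthogonalProjection_pow_mul_gaussian_eq_mul, integral_norm_pow_mul_gaussian,
    integral_exp_neg_norm_sq_div_two, ← V.finrank_add_finrank_orthogonal, Nat.cast_add, add_div,
    rpow_add (by positivity)]
  ring

end Gaussian

theorem norm_proj_apply {d : ℕ} (V : Submodule ℝ (EuclideanSpace ℝ (Fin d)))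
    (x : EuclideanSpace ℝ (Fin d)) : ‖proj V x‖ = ‖V.orthogonalProjectionOnto x‖ :=
  rfl

theorem stmt13_general {d n k : ℕ} (p : ℕ) (hk1 : 1 ≤ k) (hk2 : k ≤ d - 1)
    (V : Fin n → Submodule ℝ (EuclideanSpace ℝ (Fin d)))
    (hVdim : ∀ j, Module.finrank ℝ (V j) = k)
    (ω : Fin n → ℝ)
    (A : ℝ)
    (h : ∀ x : EuclideanSpace ℝ (Fin d),
      ∑ j, ω j * ‖proj (V j) x‖ ^ (2 * p) = A * ‖x‖ ^ (2 * p)) :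
    A = (∏ l ∈ Finset.range p, ((k : ℝ) / 2 + l)) / (∏ l ∈ Finset.range p, ((d : ℝ) / 2 + l)) *
      ∑ j, ω j := by
  have hd : 0 < d := by omega
  have : Nonempty (Fin d) := ⟨⟨0, hd⟩⟩
  have (j : Fin n) : Nontrivial (V j) := finrank_pos_iff.1 (by rw [hVdim j]; omega)
  simp_rw [norm_proj_apply] at h
  have hintegrated : ∑ j, ω j * ∫ x, ‖(V j).orthogonalProjectionOnto x‖ ^ (2 * p) * exp (-‖x‖ ^ 2 / 2) =
      A * ∫ x : EuclideanSpace ℝ (Fin d), ‖x‖ ^ (2 * p) * exp (-‖x‖ ^ 2 / 2) := by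
    simp_rw [← integral_const_mul]
    rw [← integral_finsetSum _ fun j _ =>
      (integrable_norm_orthogonalProjection_pow_mul_gaussian (V j) p).const_mul (ω j)]
    congr 1 with x
    simp only [← mul_assoc, ← sum_mul, h x]
  simp_rw [integral_norm_orthogonalProjection_pow_mul_gaussian, integral_norm_pow_mul_gaussian,
    hVdim, finrank_euclideanSpace_fin] at hintegrated
  have hPd : 0 < ∏ l ∈ range p, ((d : ℝ) / 2 + l) :=
    prod_pos fun l _ => by have := Nat.cast_pos (α := ℝ) |>.2 hd; positivity
  rw [← sum_mul] at hintegrated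
  rw [div_mul_eq_mul_div, eq_div_iff hPd.ne']
  refine mul_left_cancel₀ (by positivity : (2 * π) ^ ((d : ℝ) / 2) * (2 : ℝ) ^ p ≠ 0) ?_
  linear_combination hintegrated.symm

theorem stmt13 {d n k : ℕ} (p : ℕ) (hp : 1 ≤ p) (hk1 : 1 ≤ k) (hk2 : k ≤ d - 1)
    (V : Fin n → Submodule ℝ (EuclideanSpace ℝ (Fin d)))
    (hVdim : ∀ j, Module.finrank ℝ (V j) = k)
    (ω : Fin n → ℝ) (hω : ∀ j, 0 < ω j)
    (A : ℝ) (hA : 0 < A)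
    (h : ∀ x : EuclideanSpace ℝ (Fin d),
      ∑ j, ω j * ‖proj (V j) x‖ ^ (2 * p) = A * ‖x‖ ^ (2 * p)) :
    A = (∏ l ∈ Finset.range p, ((k : ℝ) / 2 + l)) / (∏ l ∈ Finset.range p, ((d : ℝ) / 2 + l)) *
      ∑ j, ω j :=
  stmt13_general p hk1 hk2 V hVdim ω A h
end

section
/- Let p ≥ 1 be an integer, let d ≥ 2, and let G be a finite subgroup of the orthogonal group O(d) acting on ℝ^d. Then the following are equivalent: (1) for every k with 1 ≤ k < d and every k-dimensional linear subspace V of ℝ^d, the family {g·V}_{g∈G} (indexed by g ∈ G, each with weight 1) is a tight p-fusion frame, i.e. there is a constant A > 0 with Σ_{g∈G} ‖P_{g·V}(x)‖^{2p} = A‖x‖^{2p} for all x ∈ ℝ^d; (2) every homogeneous polynomial function P : ℝ^d → ℝ of degree 2p satisfying P(g x) = P(x) for all g ∈ G and x ∈ ℝ^d is a scalar multiple of x ↦ (x_1² + ⋯ + x_d²)^p. -/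
open scoped BigOperators

/-!
(1) ⇒ (2). For `k = 1` the hypothesis says that every unit vector `v` satisfies
`∑_g ⟪g v, x⟫ ^ 2p = A_v ‖x‖ ^ 2p`; reindexing by `g ↦ g⁻¹` swaps `v` and `x`, so `A_v` does not
depend on `v`. Read this as an identity of polynomials in `x` and apply the apolar pairing
`⟨P, Q⟩ = ∑_α α! P_α Q_α` with an invariant `P`: since `⟨P, ⟪w, ·⟫ ^ n⟩ = n! P(w)`, it gives
`|G| (2p)! P(v) = c ⟨P, ‖·‖ ^ 2p⟩` for every unit `v`. So `P` is constant on the sphere, and by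
homogeneity it is a multiple of `‖x‖ ^ 2p`.

(2) ⇒ (1). `x ↦ ∑_g ‖P_{g·V} x‖ ^ 2p` is a `G`-invariant homogeneous polynomial of degree `2p`
(expand `‖P_U x‖²` in an orthonormal basis of `U`), hence equals `c ‖x‖ ^ 2p`, and evaluating at a
nonzero `x ∈ V` gives `c ≥ 1`.
-/

open MvPolynomial Finset
open scoped Nat RealInnerProductSpace

namespace MvPolynomial

variable {σ R : Type*} [CommSemiring R]

theorem IsHomogeneous.eval_smul {P : MvPolynomial σ R} {n : ℕ} (hP : P.IsHomogeneous n)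
    (t : R) (x : σ → R) : eval (t • x) P = t ^ n * eval x P := by
  rw [eval_eq, eval_eq, mul_sum]
  refine sum_congr rfl fun α hα => ?_
  rw [hP.degree_eq_sum_deg_support hα, ← prod_pow_eq_pow_sum, mul_left_comm,
    ← prod_mul_distrib]
  simp only [Pi.smul_apply, smul_eq_mul, mul_pow]

noncomputable def apolarPairing (P : MvPolynomial σ R) : MvPolynomial σ R →ₗ[R] R :=
  ∑ α ∈ P.support, (α.prod (fun _ m => (m ! : R)) * P.coeff α) • lcoeff R α

theorem apolarPairing_apply (P Q : MvPolynomial σ R) :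
    apolarPairing P Q =
      ∑ α ∈ P.support, α.prod (fun _ m => (m ! : R)) * P.coeff α * Q.coeff α := by
  simp [apolarPairing, LinearMap.sum_apply, mul_assoc]

theorem IsHomogeneous.apolarPairing_sum_smul_X_pow [Fintype σ] {P : MvPolynomial σ R} {n : ℕ}
    (hP : P.IsHomogeneous n) (w : σ → R) :
    apolarPairing P ((∑ i, w i • X i) ^ n) = n ! * eval w P := by
  rw [apolarPairing_apply, eval_eq, mul_sum]
  refine sum_congr rfl fun α hα => ?_
  have hdeg : α.sum (fun _ m => m) = n := (hP.degree_eq_sum_deg_support hα).symm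
  rw [coeff_linearCombination_X_pow_of_fintype, if_pos hdeg]
  have hfact : (α.prod fun _ m => m !) * α.multinomial = n ! := by
    rw [← hdeg]
    exact Nat.multinomial_spec α.support α
  rw [← hfact]
  push_cast [Finsupp.prod]
  ring

theorem isHomogeneous_sum_X_sq_pow [Fintype σ] (p : ℕ) :
    ((∑ i : σ, X i ^ 2 : MvPolynomial σ R) ^ p).IsHomogeneous (2 * p) :=
  (IsHomogeneous.sum _ _ _ fun i _ => isHomogeneous_X_pow i 2).pow p

end MvPolynomial

section OrbitFrames

variable {E : Type*} [NormedAddCommGroup E] [InnerProductSpace ℝ E]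
  (G : Subgroup (E ≃ₗᵢ[ℝ] E)) [Fintype G]

theorem sum_inner_pow_comm (v x : E) (n : ℕ) :
    ∑ g : G, ⟪(g : E ≃ₗᵢ[ℝ] E) v, x⟫ ^ n = ∑ g : G, ⟪(g : E ≃ₗᵢ[ℝ] E) x, v⟫ ^ n := by
  refine Fintype.sum_equiv (Equiv.inv G) _ _ fun g => ?_
  rw [LinearIsometryEquiv.inner_map_eq_flip, real_inner_comm]
  rfl

theorem exists_forall_sum_inner_pow_eq [Nontrivial E] {n : ℕ}
    (h : ∀ v : E, ‖v‖ = 1 → ∃ A : ℝ, ∀ x, ∑ g : G, ⟪(g : E ≃ₗᵢ[ℝ] E) v, x⟫ ^ n = A * ‖x‖ ^ n) :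
    ∃ c : ℝ, ∀ v : E, ‖v‖ = 1 → ∀ x, ∑ g : G, ⟪(g : E ≃ₗᵢ[ℝ] E) v, x⟫ ^ n = c * ‖x‖ ^ n := by
  obtain ⟨v₀, hv₀⟩ := exists_norm_eq E zero_le_one
  obtain ⟨c, hc⟩ := h v₀ hv₀
  refine ⟨c, fun v hv x => ?_⟩
  obtain ⟨A, hA⟩ := h v hv
  have hAc : A = c := by
    simpa [hv, hv₀] using (hA v₀).symm.trans ((sum_inner_pow_comm G v v₀ n).trans (hc v))
  rw [hA x, hAc]

theorem norm_starProjection_map_span_singleton {v : E} (hv : ‖v‖ = 1) (g : E ≃ₗᵢ[ℝ] E) (x : E) :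
    ‖((ℝ ∙ v).map (g.toLinearEquiv : E →ₗ[ℝ] E)).starProjection x‖ = |⟪g v, x⟫| := by
  rw [Submodule.starProjection_map_apply, g.norm_map, Submodule.starProjection_unit_singleton ℝ hv,
    norm_smul, hv, mul_one, Real.norm_eq_abs, ← g.inner_map_map, g.apply_symm_apply]

variable (V : Submodule ℝ E) [V.HasOrthogonalProjection]

noncomputable def fusionFrameSum (n : ℕ) (x : E) : ℝ :=
  ∑ g : G, ‖(V.map ((g : E ≃ₗᵢ[ℝ] E).toLinearEquiv : E →ₗ[ℝ] E)).starProjection x‖ ^ n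

theorem fusionFrameSum_apply_of_mem {a : E ≃ₗᵢ[ℝ] E} (ha : a ∈ G) (n : ℕ) (x : E) :
    fusionFrameSum G V n (a x) = fusionFrameSum G V n x := by
  refine Fintype.sum_equiv (Equiv.mulLeft ⟨a, ha⟩⁻¹) _ _ fun g => ?_
  simp only [Submodule.starProjection_map_apply, LinearIsometryEquiv.norm_map]
  rfl

theorem norm_pow_le_fusionFrameSum {x : E} (hx : x ∈ V) (n : ℕ) :
    ‖x‖ ^ n ≤ fusionFrameSum G V n x := by
  have h1 : ‖(V.map (((1 : G) : E ≃ₗᵢ[ℝ] E).toLinearEquiv : E →ₗ[ℝ] E)).starProjection x‖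
      = ‖x‖ := by
    rw [Submodule.starProjection_map_apply, LinearIsometryEquiv.norm_map]
    exact congrArg norm (Submodule.starProjection_eq_self_iff.mpr hx)
  rw [← h1]
  exact Finset.single_le_sum (f := fun g : G =>
    ‖(V.map ((g : E ≃ₗᵢ[ℝ] E).toLinearEquiv : E →ₗ[ℝ] E)).starProjection x‖ ^ n)
    (fun g _ => by positivity) (mem_univ 1)

end OrbitFrames

namespace MvPolynomial

theorem eq_of_forall_eval_ofLp {ι : Type*} {P Q : MvPolynomial ι ℝ}
    (h : ∀ x : EuclideanSpace ℝ ι, eval x.ofLp P = eval x.ofLp Q) : P = Q :=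
  funext fun x => h (WithLp.toLp 2 x)

variable {ι : Type*} [Fintype ι]

theorem eval_ofLp_sum_smul_X (w x : EuclideanSpace ℝ ι) :
    eval x.ofLp (∑ i, w i • X i) = ⟪w, x⟫ := by
  simp [PiLp.inner_apply, mul_comm]

theorem eval_ofLp_sum_X_sq_pow (x : EuclideanSpace ℝ ι) (p : ℕ) :
    eval x.ofLp ((∑ i, X i ^ 2) ^ p) = ‖x‖ ^ (2 * p) := by
  simp [EuclideanSpace.norm_sq_eq, pow_mul]

theorem IsHomogeneous.eq_of_eqOn_sphere [Nonempty ι] {P Q : MvPolynomial ι ℝ}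
    {n : ℕ} (hP : P.IsHomogeneous n) (hQ : Q.IsHomogeneous n)
    (h : ∀ v : EuclideanSpace ℝ ι, ‖v‖ = 1 → eval v.ofLp P = eval v.ofLp Q) : P = Q := by
  refine eq_of_forall_eval_ofLp fun x => ?_
  obtain ⟨v, hv, hx⟩ : ∃ v : EuclideanSpace ℝ ι, ‖v‖ = 1 ∧ x = ‖x‖ • v := by
    rcases eq_or_ne x 0 with rfl | hx
    · obtain ⟨v, hv⟩ := exists_norm_eq (EuclideanSpace ℝ ι) zero_le_one
      exact ⟨v, hv, by simp⟩
    · exact ⟨‖x‖⁻¹ • x, norm_smul_inv_norm hx, by rw [smul_inv_smul₀ (norm_ne_zero_iff.mpr hx)]⟩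
  rw [hx, WithLp.ofLp_smul, hP.eval_smul, hQ.eval_smul, h v hv]

theorem exists_isHomogeneous_eval_ofLp_eq_norm_starProjection_sq
    (U : Submodule ℝ (EuclideanSpace ℝ ι)) :
    ∃ Q : MvPolynomial ι ℝ, Q.IsHomogeneous 2 ∧
      ∀ x, eval x.ofLp Q = ‖U.starProjection x‖ ^ 2 := by
  let b := stdOrthonormalBasis ℝ U
  refine ⟨∑ j, (∑ i, (b j : EuclideanSpace ℝ ι) i • X i) ^ 2,
    IsHomogeneous.sum _ _ _ fun j _ => ?_, fun x => ?_⟩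
  · simp only [smul_eq_C_mul]
    exact (IsHomogeneous.sum _ _ _ fun i _ => isHomogeneous_C_mul_X _ i).pow 2
  · rw [map_sum]
    simp only [map_pow, eval_ofLp_sum_smul_X,
      ← Submodule.inner_orthogonalProjectionOnto_eq_of_mem_left]
    exact b.sum_sq_inner_right (U.orthogonalProjectionOnto x)

theorem IsHomogeneous.factorial_mul_sum_eval_ofLp {P : MvPolynomial ι ℝ} {p : ℕ}
    (hP : P.IsHomogeneous (2 * p)) {κ : Type*} [Fintype κ] (w : κ → EuclideanSpace ℝ ι) (c : ℝ)
    (hw : ∀ x, ∑ j, ⟪w j, x⟫ ^ (2 * p) = c * ‖x‖ ^ (2 * p)) :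
    (2 * p)! * ∑ j, eval (w j).ofLp P = c * apolarPairing P ((∑ i, X i ^ 2) ^ p) := by
  have hpoly : ∑ j, (∑ i, w j i • X i) ^ (2 * p) = c • (∑ i : ι, X i ^ 2) ^ p :=
    eq_of_forall_eval_ofLp fun x => by
      rw [smul_eval, eval_ofLp_sum_X_sq_pow, ← hw, map_sum]
      simp only [map_pow, eval_ofLp_sum_smul_X]
  rw [← smul_eq_mul c, ← map_smul, ← hpoly, map_sum, mul_sum]
  exact sum_congr rfl fun j _ => (hP.apolarPairing_sum_smul_X_pow _).symm

theorem exists_eq_smul_sum_X_sq_pow_of_invariant [Nonempty ι]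
    (G : Subgroup (EuclideanSpace ℝ ι ≃ₗᵢ[ℝ] EuclideanSpace ℝ ι)) [Fintype G] {p : ℕ} {c : ℝ}
    (hc : ∀ v : EuclideanSpace ℝ ι, ‖v‖ = 1 → ∀ x,
      ∑ g : G, ⟪(g : EuclideanSpace ℝ ι ≃ₗᵢ[ℝ] EuclideanSpace ℝ ι) v, x⟫ ^ (2 * p)
        = c * ‖x‖ ^ (2 * p))
    {P : MvPolynomial ι ℝ} (hP : P.IsHomogeneous (2 * p))
    (hinv : ∀ g ∈ G, ∀ x, eval (g x).ofLp P = eval x.ofLp P) :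
    ∃ a : ℝ, P = a • (∑ i, X i ^ 2) ^ p := by
  refine ⟨c * apolarPairing P ((∑ i, X i ^ 2) ^ p) / (Fintype.card G * (2 * p)!),
    hP.eq_of_eqOn_sphere ?_ fun v hv => ?_⟩
  · rw [smul_eq_C_mul]
    exact (isHomogeneous_sum_X_sq_pow p).C_mul _
  have horbit := hP.factorial_mul_sum_eval_ofLp _ c (hc v hv)
  simp only [hinv _ (SetLike.coe_mem _), sum_const, card_univ, nsmul_eq_mul] at horbit
  rw [smul_eval, eval_ofLp_sum_X_sq_pow, hv, one_pow, mul_one, ← horbit]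
  field_simp

theorem exists_isHomogeneous_eval_ofLp_eq_fusionFrameSum
    (G : Subgroup (EuclideanSpace ℝ ι ≃ₗᵢ[ℝ] EuclideanSpace ℝ ι)) [Fintype G]
    (V : Submodule ℝ (EuclideanSpace ℝ ι)) (p : ℕ) :
    ∃ S : MvPolynomial ι ℝ, S.IsHomogeneous (2 * p) ∧
      ∀ x, eval x.ofLp S = fusionFrameSum G V (2 * p) x := by
  choose Q hQ hQeval using exists_isHomogeneous_eval_ofLp_eq_norm_starProjection_sq (ι := ι)
  refine ⟨∑ g : G, Q (V.map ((g : EuclideanSpace ℝ ι ≃ₗᵢ[ℝ] EuclideanSpace ℝ ι).toLinearEquiv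
    : EuclideanSpace ℝ ι →ₗ[ℝ] EuclideanSpace ℝ ι)) ^ p,
    IsHomogeneous.sum _ _ _ fun g _ => (hQ _).pow p, fun x => ?_⟩
  simp only [map_sum, map_pow, hQeval, fusionFrameSum, pow_mul]

end MvPolynomial

theorem sum_norm_proj_map_pow_eq_fusionFrameSum {d : ℕ}
    (G : Subgroup (EuclideanSpace ℝ (Fin d) ≃ₗᵢ[ℝ] EuclideanSpace ℝ (Fin d))) [Fintype G]
    (V : Submodule ℝ (EuclideanSpace ℝ (Fin d))) (n : ℕ) (x : EuclideanSpace ℝ (Fin d)) :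
    ∑ g : G, ‖proj (V.map
        ((g : EuclideanSpace ℝ (Fin d) ≃ₗᵢ[ℝ] EuclideanSpace ℝ (Fin d)).toLinearEquiv
          : EuclideanSpace ℝ (Fin d) →ₗ[ℝ] EuclideanSpace ℝ (Fin d))) x‖ ^ n
      = fusionFrameSum G V n x :=
  rfl

theorem stmt16_general {d : ℕ} (hd : 2 ≤ d) (p : ℕ)
    (G : Subgroup (EuclideanSpace ℝ (Fin d) ≃ₗᵢ[ℝ] EuclideanSpace ℝ (Fin d)))
    [Fintype G] :
    (∀ k : ℕ, 1 ≤ k → k < d →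
      ∀ V : Submodule ℝ (EuclideanSpace ℝ (Fin d)), Module.finrank ℝ V = k →
        ∃ A : ℝ, 0 < A ∧ ∀ x : EuclideanSpace ℝ (Fin d),
          ∑ g : G,
            ‖proj (V.map
              ((g : EuclideanSpace ℝ (Fin d) ≃ₗᵢ[ℝ] EuclideanSpace ℝ (Fin d)).toLinearEquiv
                : EuclideanSpace ℝ (Fin d) →ₗ[ℝ] EuclideanSpace ℝ (Fin d))) x‖ ^ (2 * p)
            = A * ‖x‖ ^ (2 * p))
    ↔
    (∀ P : MvPolynomial (Fin d) ℝ, P.IsHomogeneous (2 * p) →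
      (∀ g ∈ G, ∀ x : EuclideanSpace ℝ (Fin d),
        MvPolynomial.eval (fun i => g x i) P = MvPolynomial.eval (fun i => x i) P) →
      ∃ c : ℝ, P = c • (∑ i : Fin d, MvPolynomial.X i ^ 2) ^ p) := by
  have : Nonempty (Fin d) := ⟨⟨0, by omega⟩⟩
  simp only [sum_norm_proj_map_pow_eq_fusionFrameSum]
  constructor
  · intro hframe P hP hinv
    obtain ⟨c, hc⟩ := exists_forall_sum_inner_pow_eq G fun v hv => by
      obtain ⟨A, -, hA⟩ := hframe 1 le_rfl (by omega) (ℝ ∙ v)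
        (finrank_span_singleton (norm_ne_zero_iff.mp (by simp [hv])))
      refine ⟨A, fun x => ?_⟩
      rw [← hA x, fusionFrameSum]
      simp only [norm_starProjection_map_span_singleton hv, (even_two_mul p).pow_abs]
    exact exists_eq_smul_sum_X_sq_pow_of_invariant G hc hP hinv
  · intro hpoly k hk _ V hV
    obtain ⟨S, hShom, hSeval⟩ := exists_isHomogeneous_eval_ofLp_eq_fusionFrameSum G V p
    obtain ⟨c, rfl⟩ := hpoly S hShom fun g hg x => by
      rw [hSeval, hSeval, fusionFrameSum_apply_of_mem G V hg]
    have hframe : ∀ x, fusionFrameSum G V (2 * p) x = c * ‖x‖ ^ (2 * p) := fun x => by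
      rw [← hSeval, smul_eval, eval_ofLp_sum_X_sq_pow]
    obtain ⟨x₀, hx₀⟩ := Module.finrank_pos_iff_exists_ne_zero.mp (hV ▸ hk : 0 < Module.finrank ℝ V)
    have hx₀pos : 0 < ‖(x₀ : EuclideanSpace ℝ (Fin d))‖ ^ (2 * p) :=
      pow_pos (norm_pos_iff.mpr ((Submodule.coe_eq_zero).not.mpr hx₀)) _
    have hle := (norm_pow_le_fusionFrameSum G V x₀.2 (2 * p)).trans_eq (hframe x₀)
    exact ⟨c, (pos_iff_pos_of_mul_pos (hx₀pos.trans_le hle)).mpr hx₀pos, hframe⟩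

theorem stmt16 {d : ℕ} (hd : 2 ≤ d) (p : ℕ) (hp : 1 ≤ p)
    (G : Subgroup (EuclideanSpace ℝ (Fin d) ≃ₗᵢ[ℝ] EuclideanSpace ℝ (Fin d)))
    [Fintype G] :
    (∀ k : ℕ, 1 ≤ k → k < d →
      ∀ V : Submodule ℝ (EuclideanSpace ℝ (Fin d)), Module.finrank ℝ V = k →
        ∃ A : ℝ, 0 < A ∧ ∀ x : EuclideanSpace ℝ (Fin d),
          ∑ g : G,
            ‖proj (V.map
              ((g : EuclideanSpace ℝ (Fin d) ≃ₗᵢ[ℝ] EuclideanSpace ℝ (Fin d)).toLinearEquiv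
                : EuclideanSpace ℝ (Fin d) →ₗ[ℝ] EuclideanSpace ℝ (Fin d))) x‖ ^ (2 * p)
            = A * ‖x‖ ^ (2 * p))
    ↔
    (∀ P : MvPolynomial (Fin d) ℝ, P.IsHomogeneous (2 * p) →
      (∀ g ∈ G, ∀ x : EuclideanSpace ℝ (Fin d),
        MvPolynomial.eval (fun i => g x i) P = MvPolynomial.eval (fun i => x i) P) →
      ∃ c : ℝ, P = c • (∑ i : Fin d, MvPolynomial.X i ^ 2) ^ p) :=
  stmt16_general hd p G
end
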